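/- The confluent Vandermonde matrix A of size N = μ_1 + ... + μ_r, formed by horizontally joining the N × μ_k blocks A_k = [binom(i,j) α_k^{i-j}]_{0≤i≤N-1, 0≤j≤μ_k-1} for distinct α_1,...,α_r in a field, is invertible; its determinant equals Π_{i<j} (α_i - α_j)^{μ_i μ_j} up to sign. -/

import Mathlib

open Polynomial Finset Matrix

lemma sum_coeff_choose {F : Type} [Field F] {N : ℕ} (q : F[X]) (hq : q.natDegree < N)
    (j : ℕ) (x : F) :
    ∑ i : Fin N, q.coeff i * ((Nat.choose i j : F) * x ^ ((i : ℕ) - j)) =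
      ((taylor x) q).coeff j := by
  rw [taylor_coeff, eval_eq_sum_range'
    (lt_of_le_of_lt ((natDegree_hasseDeriv_le q j).trans (Nat.sub_le _ _)) hq) x]
  rw [Fin.sum_univ_eq_sum_range (fun i => q.coeff i * ((Nat.choose i j : F) * x ^ (i - j)))]
  have h1 : ∑ i ∈ Finset.range N, q.coeff i * ((Nat.choose i j : F) * x ^ (i - j)) =
      ∑ i ∈ Finset.Ico j N, q.coeff i * ((Nat.choose i j : F) * x ^ (i - j)) := by
    refine (Finset.sum_subset ?_ ?_).symm
    · intro i hi
      exact Finset.mem_range.2 (Finset.mem_Ico.1 hi).2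
    · intro i hi hni
      have : i < j := by
        have := Finset.mem_range.1 hi
        simp [Finset.mem_Ico, this] at hni
        exact hni
      simp [Nat.choose_eq_zero_of_lt this]
  have h2 : ∑ n ∈ Finset.range N, (hasseDeriv j q).coeff n * x ^ n =
      ∑ n ∈ Finset.range (N - j), (hasseDeriv j q).coeff n * x ^ n := by
    refine (Finset.sum_subset ?_ ?_).symm
    · exact Finset.range_subset_range.2 (Nat.sub_le _ _)
    · intro n hn hnn
      have h3 : N ≤ n + j := by
        have h4 := Finset.mem_range.1 hn
        have h5 : ¬ n < N - j := fun h => hnn (Finset.mem_range.2 h)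
        omega
      rw [hasseDeriv_coeff]
      rw [coeff_eq_zero_of_natDegree_lt (lt_of_lt_of_le hq h3)]
      ring
  rw [h1, h2, Finset.sum_Ico_eq_sum_range]
  apply Finset.sum_congr rfl
  intro n hn
  rw [hasseDeriv_coeff]
  have : j + n - j = n := by omega
  rw [this, add_comm j n]
  ring

lemma taylor_shift {F : Type} [Field F] (x : F) (m : ℕ) (h : F[X]) :
    taylor x ((X - C x) ^ m * h) = X ^ m * taylor x h := by
  have h1 : ∀ p : F[X], taylor x p = taylorAlgHom x p := fun p => rfl
  rw [h1, _root_.map_mul, map_pow, map_sub, ← h1, ← h1, ← h1]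
  rw [taylor_X, taylor_C]
  ring_nf

lemma taylor_coeff_lt {F : Type} [Field F] (x : F) (m j : ℕ) (h : F[X]) (hj : j < m) :
    (taylor x ((X - C x) ^ m * h)).coeff j = 0 := by
  rw [taylor_shift, mul_comm, coeff_mul_X_pow', if_neg (by omega)]

lemma taylor_coeff_self {F : Type} [Field F] (x : F) (m : ℕ) (h : F[X]) :
    (taylor x ((X - C x) ^ m * h)).coeff m = h.eval x := by
  rw [taylor_shift, mul_comm, coeff_mul_X_pow', if_pos le_rfl, Nat.sub_self, taylor_coeff_zero]

/-- The Hermite-type basis polynomial attached to an index `⟨k, j⟩`. -/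
noncomputable def cvPoly {F : Type} [Field F] {r : ℕ} (α : Fin r → F) (μ : Fin r → ℕ)
    (c : (k : Fin r) × Fin (μ k)) : F[X] :=
  (X - C (α c.1)) ^ (c.2 : ℕ) * ∏ l ∈ Finset.univ.filter (fun l => l < c.1), (X - C (α l)) ^ (μ l)

/-- The degree index of `cvPoly`. -/
def cvIdx {r : ℕ} (μ : Fin r → ℕ) (c : (k : Fin r) × Fin (μ k)) : ℕ :=
  (c.2 : ℕ) + ∑ l ∈ Finset.univ.filter (fun l => l < c.1), μ l

lemma cvPoly_monic {F : Type} [Field F] {r : ℕ} (α : Fin r → F) (μ : Fin r → ℕ)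
    (c : (k : Fin r) × Fin (μ k)) : (cvPoly α μ c).Monic :=
  ((monic_X_sub_C _).pow _).mul
    (monic_prod_of_monic _ _ fun l _ => (monic_X_sub_C _).pow _)

lemma cvPoly_natDegree {F : Type} [Field F] {r : ℕ} (α : Fin r → F) (μ : Fin r → ℕ)
    (c : (k : Fin r) × Fin (μ k)) : (cvPoly α μ c).natDegree = cvIdx μ c := by
  unfold cvPoly cvIdx
  rw [Monic.natDegree_mul ((monic_X_sub_C _).pow _)
    (monic_prod_of_monic _ _ fun l _ => (monic_X_sub_C _).pow _),
    natDegree_pow, natDegree_X_sub_C,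
    natDegree_prod_of_monic _ _ fun l _ => (monic_X_sub_C _).pow _]
  simp [natDegree_pow, natDegree_X_sub_C]

lemma cvIdx_mono {r : ℕ} (μ : Fin r → ℕ) {c c' : (k : Fin r) × Fin (μ k)}
    (h : c.1 < c'.1) : cvIdx μ c < cvIdx μ c' := by
  unfold cvIdx
  have h1 : (c.2 : ℕ) + ∑ l ∈ Finset.univ.filter (fun l => l < c.1), μ l <
      μ c.1 + ∑ l ∈ Finset.univ.filter (fun l => l < c.1), μ l := by
    have := c.2.isLt; omega
  have h2 : μ c.1 + ∑ l ∈ Finset.univ.filter (fun l => l < c.1), μ l ≤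
      ∑ l ∈ Finset.univ.filter (fun l => l < c'.1), μ l := by
    rw [← Finset.sum_insert (by simp)]
    apply Finset.sum_le_sum_of_subset
    intro l hl
    rcases Finset.mem_insert.1 hl with rfl | hl
    · simp [h]
    · simp only [Finset.mem_filter, Finset.mem_univ, true_and] at hl ⊢
      exact hl.trans h
  omega

lemma cvIdx_lt {r : ℕ} (μ : Fin r → ℕ) (c : (k : Fin r) × Fin (μ k)) :
    cvIdx μ c < ∑ k, μ k := by
  unfold cvIdx
  have h2 : μ c.1 + ∑ l ∈ Finset.univ.filter (fun l => l < c.1), μ l ≤ ∑ k, μ k := by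
    rw [← Finset.sum_insert (by simp)]
    exact Finset.sum_le_sum_of_subset (Finset.subset_univ _)
  have := c.2.isLt; omega

lemma cvIdx_injective {r : ℕ} (μ : Fin r → ℕ) : Function.Injective (cvIdx μ) := by
  rintro ⟨k, j⟩ ⟨k', j'⟩ h
  rcases lt_trichotomy k k' with hk | rfl | hk
  · exact absurd h (cvIdx_mono μ (c := ⟨k, j⟩) (c' := ⟨k', j'⟩) hk).ne
  · unfold cvIdx at h
    simp only at h
    have : (j : ℕ) = (j' : ℕ) := by omega
    simp [Fin.ext_iff, this]
  · exact absurd h.symm (cvIdx_mono μ (c := ⟨k', j'⟩) (c' := ⟨k, j⟩) hk).ne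

set_option maxHeartbeats 1600000 in
/-- The confluent Vandermonde matrix of size `N = μ_1 + ⋯ + μ_r`, formed by horizontally
joining the `N × μ_k` blocks `A_k = [binom(i,j) α_k^{i-j}]` for distinct `α_1, …, α_r` in
a field, is invertible; its determinant is `Π_{i<j} (α_i - α_j)^{μ_i μ_j}` up to sign. -/
theorem stmt19 (F : Type) [Field F] (r N : ℕ) (α : Fin r → F)
    (hα : Function.Injective α) (μ : Fin r → ℕ) (hμ : ∀ k, 0 < μ k)
    (hN : ∑ k, μ k = N)
    (A : Matrix (Fin N) ((k : Fin r) × Fin (μ k)) F)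
    (hA : ∀ (i : Fin N) (c : (k : Fin r) × Fin (μ k)),
      A i c = (Nat.choose (i : ℕ) (c.2 : ℕ) : F) * α c.1 ^ ((i : ℕ) - (c.2 : ℕ)))
    (e : ((k : Fin r) × Fin (μ k)) ≃ Fin N) :
    IsUnit (A.submatrix id e.symm).det ∧
      ((A.submatrix id e.symm).det =
          (∏ i : Fin r, ∏ j : Fin r,
            if i < j then (α i - α j) ^ (μ i * μ j) else 1) ∨
        (A.submatrix id e.symm).det =
          -(∏ i : Fin r, ∏ j : Fin r,
            if i < j then (α i - α j) ^ (μ i * μ j) else 1)) := by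
  classical
  set T := ∏ i : Fin r, ∏ j : Fin r, if i < j then (α i - α j) ^ (μ i * μ j) else 1 with hTdef
  set Am := A.submatrix id e.symm with hAmdef
  have hflt : ∀ c, cvIdx μ c < N := fun c => hN ▸ cvIdx_lt μ c
  have hcard : Fintype.card ((k : Fin r) × Fin (μ k)) = N := by
    simp [Fintype.card_sigma, hN]
  obtain ⟨d, hd⟩ : ∃ d : ((k : Fin r) × Fin (μ k)) ≃ Fin N,
      ∀ c, (d c : ℕ) = cvIdx μ c := by
    refine ⟨Equiv.ofBijective (fun c => ⟨cvIdx μ c, hflt c⟩) ?_, fun c => rfl⟩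
    refine (Fintype.bijective_iff_injective_and_card _).2 ⟨?_, hcard.trans (Fintype.card_fin N).symm⟩
    intro c c' h
    exact cvIdx_injective μ (by simpa [Fin.ext_iff] using h)
  have hds : ∀ i : Fin N, cvIdx μ (d.symm i) = (i : ℕ) := fun i => by
    rw [← hd, d.apply_symm_apply]
  set Bm : Matrix (Fin N) (Fin N) F :=
    Matrix.of (fun i n => (cvPoly α μ (d.symm i)).coeff n) with hBm
  have hdeg' : ∀ i : Fin N, (cvPoly α μ (d.symm i)).natDegree = (i : ℕ) := fun i =>
    (cvPoly_natDegree α μ _).trans (hds i)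
  have hBmtri : Bm.BlockTriangular OrderDual.toDual := by
    intro i n hni
    have h1 : (i : ℕ) < (n : ℕ) := hni
    show (cvPoly α μ (d.symm i)).coeff n = 0
    exact coeff_eq_zero_of_natDegree_lt (by rw [hdeg' i]; exact h1)
  have hBmdet : Bm.det = 1 := by
    rw [Matrix.det_of_lowerTriangular Bm hBmtri]
    apply Finset.prod_eq_one
    intro i _
    show (cvPoly α μ (d.symm i)).coeff i = 1
    rw [← hdeg' i]
    exact (cvPoly_monic α μ _).coeff_natDegree
  set M : Matrix (Fin N) (Fin N) F := Bm * (A.submatrix id d.symm) with hMdef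
  have hM : ∀ i i' : Fin N, M i i' =
      (taylor (α (d.symm i').1) (cvPoly α μ (d.symm i))).coeff ((d.symm i').2 : ℕ) := by
    intro i i'
    rw [hMdef, Matrix.mul_apply]
    simp only [hBm, Matrix.of_apply, Matrix.submatrix_apply, id_eq, hA]
    exact sum_coeff_choose _ (by rw [hdeg' i]; exact i.isLt) _ _
  have hMtri : M.BlockTriangular id := by
    intro i i' hlt
    have hlt' : (i' : ℕ) < (i : ℕ) := hlt
    have hidx : cvIdx μ (d.symm i') < cvIdx μ (d.symm i) := by rw [hds, hds]; exact hlt'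
    rw [hM]
    rcases lt_trichotomy (d.symm i).1 (d.symm i').1 with hk | hk | hk
    · exact absurd (cvIdx_mono μ hk) (not_lt.2 hidx.le)
    · have hj : ((d.symm i').2 : ℕ) < ((d.symm i).2 : ℕ) := by
        have hsum := congrArg (fun k : Fin r => ∑ l ∈ Finset.univ.filter (fun l => l < k), μ l) hk
        unfold cvIdx at hidx
        omega
      unfold cvPoly
      rw [show α (d.symm i).1 = α (d.symm i').1 from congrArg α hk]
      exact taylor_coeff_lt _ _ _ _ hj
    · obtain ⟨g, hg⟩ : ∃ g, cvPoly α μ (d.symm i) =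
          (X - C (α (d.symm i').1)) ^ (μ (d.symm i').1) * g := by
        have hdvd : (X - C (α (d.symm i').1)) ^ (μ (d.symm i').1) ∣
            ∏ l ∈ Finset.univ.filter (fun l => l < (d.symm i).1), (X - C (α l)) ^ (μ l) :=
          Finset.dvd_prod_of_mem _ (by simp [hk])
        exact (hdvd.mul_left ((X - C (α (d.symm i).1)) ^ ((d.symm i).2 : ℕ)))
      rw [hg]
      exact taylor_coeff_lt _ _ _ _ (d.symm i').2.isLt
  have hMdiag : ∀ i : Fin N, M i i = (fun c : (k : Fin r) × Fin (μ k) =>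
      ∏ l ∈ Finset.univ.filter (fun l => l < c.1), (α c.1 - α l) ^ (μ l)) (d.symm i) := by
    intro i
    rw [hM]
    unfold cvPoly
    rw [taylor_coeff_self]
    simp [eval_prod]
  have hdetM : M.det = ∏ k : Fin r, ∏ l : Fin r,
      if l < k then (α k - α l) ^ (μ l * μ k) else 1 := by
    rw [Matrix.det_of_upperTriangular hMtri]
    calc ∏ i : Fin N, M i i
        = ∏ i : Fin N, (fun c : (k : Fin r) × Fin (μ k) =>
            ∏ l ∈ Finset.univ.filter (fun l => l < c.1), (α c.1 - α l) ^ (μ l)) (d.symm i) :=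
          Finset.prod_congr rfl fun i _ => hMdiag i
      _ = ∏ c : (k : Fin r) × Fin (μ k),
            ∏ l ∈ Finset.univ.filter (fun l => l < c.1), (α c.1 - α l) ^ (μ l) :=
          Equiv.prod_comp d.symm (fun c : (k : Fin r) × Fin (μ k) =>
            ∏ l ∈ Finset.univ.filter (fun l => l < c.1), (α c.1 - α l) ^ (μ l))
      _ = ∏ k : Fin r, ∏ _j : Fin (μ k),
            ∏ l ∈ Finset.univ.filter (fun l => l < k), (α k - α l) ^ (μ l) := by
          rw [← Finset.univ_sigma_univ, Finset.prod_sigma]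
      _ = ∏ k : Fin r, ∏ l ∈ Finset.univ.filter (fun l => l < k),
            (α k - α l) ^ (μ l * μ k) := by
          refine Finset.prod_congr rfl fun k _ => ?_
          rw [Finset.prod_const, card_univ, Fintype.card_fin, ← Finset.prod_pow]
          exact Finset.prod_congr rfl fun l _ => (pow_mul _ _ _).symm
      _ = ∏ k : Fin r, ∏ l : Fin r, if l < k then (α k - α l) ^ (μ l * μ k) else 1 :=
          Finset.prod_congr rfl fun k _ => Finset.prod_filter _ _
  set σ : Equiv.Perm (Fin N) := d.symm.trans e with hσ
  have hsub : A.submatrix id d.symm = Am.submatrix id σ := by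
    ext i i'
    simp [hAmdef, hσ, Matrix.submatrix_apply]
  have hkey : M.det = ((Equiv.Perm.sign σ : ℤ) : F) * Am.det := by
    rw [hMdef, Matrix.det_mul, hBmdet, one_mul, hsub, Matrix.det_permute']
  have hR : (∏ k : Fin r, ∏ l : Fin r, if l < k then (α k - α l) ^ (μ l * μ k) else 1)
      = ∏ i : Fin r, ∏ j : Fin r, if i < j then (α j - α i) ^ (μ i * μ j) else 1 :=
    Finset.prod_comm
  have hRdet : ((Equiv.Perm.sign σ : ℤ) : F) * Am.det =
      ∏ i : Fin r, ∏ j : Fin r, if i < j then (α j - α i) ^ (μ i * μ j) else 1 := by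
    rw [← hkey, hdetM, hR]
  set ε := ∏ i : Fin r, ∏ j : Fin r, if i < j then (-1 : F) ^ (μ i * μ j) else 1 with hεdef
  have hsplit : T = ε * (∏ i : Fin r, ∏ j : Fin r,
      if i < j then (α j - α i) ^ (μ i * μ j) else 1) := by
    rw [hTdef, hεdef, ← Finset.prod_mul_distrib]
    refine Finset.prod_congr rfl fun i _ => ?_
    rw [← Finset.prod_mul_distrib]
    refine Finset.prod_congr rfl fun j _ => ?_
    by_cases h : i < j
    · simp only [if_pos h]
      rw [show α i - α j = -(α j - α i) by ring, neg_pow]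
    · simp [h]
  have hε : ε = 1 ∨ ε = -1 := by
    rw [hεdef]
    refine Finset.prod_induction _ (fun x => x = 1 ∨ x = -1) ?_ (Or.inl rfl) ?_
    · rintro a b (rfl | rfl) (rfl | rfl) <;> simp
    · intro i _
      refine Finset.prod_induction _ (fun x => x = 1 ∨ x = -1) ?_ (Or.inl rfl) ?_
      · rintro a b (rfl | rfl) (rfl | rfl) <;> simp
      · intro j _
        by_cases h : i < j
        · simp only [if_pos h]
          rcases Nat.even_or_odd (μ i * μ j) with he | ho
          · exact Or.inl he.neg_one_pow
          · exact Or.inr ho.neg_one_pow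
        · simp [h]
  have hTne : T ≠ 0 := by
    rw [hTdef]
    refine Finset.prod_ne_zero_iff.2 fun i _ => Finset.prod_ne_zero_iff.2 fun j _ => ?_
    by_cases h : i < j
    · simp only [if_pos h]
      exact pow_ne_zero _ (sub_ne_zero.2 fun hij => h.ne (hα hij))
    · simp [h]
  have hsign := Int.units_eq_one_or (Equiv.Perm.sign σ)
  have hAmT : Am.det = T ∨ Am.det = -T := by
    rcases hsign with hs | hs <;> rcases hε with he | he <;>
      rw [hs] at hRdet <;> rw [he] at hsplit <;>
      simp only [Units.val_one, Int.cast_one, one_mul, Units.val_neg, Int.cast_neg,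
        Int.cast_one, neg_mul, neg_neg] at hRdet hsplit
    · exact Or.inl (by rw [hsplit]; exact hRdet)
    · exact Or.inr (by rw [hsplit, ← hRdet]; ring)
    · exact Or.inr (by rw [hsplit, ← hRdet]; ring)
    · exact Or.inl (by rw [hsplit, ← hRdet]; ring)
  refine ⟨?_, hAmT⟩
  rcases hAmT with h | h <;> rw [h]
  · exact isUnit_iff_ne_zero.2 hTne
  · exact isUnit_iff_ne_zero.2 (neg_ne_zero.2 hTne)
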